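/- arXiv:1511.03938 — 2 statements merged into one kernel-verified Lean document; each statement's English description precedes it below -/
import Mathlib

section
/- For any ε > 0 and any smooth scalar function u compactly supported in ℝ² minus the closed ball of radius ε around the origin, the logarithmic Hardy inequality ‖u/(|x| log(|x|/ε))‖_{L²} ≤ 2 ‖∇u‖_{L²} holds. -/
open MeasureTheory


local notation "E2" => EuclideanSpace ℝ (Fin 2)

noncomputable def mE (ε : ℝ) (x : E2) : ℝ :=
  ‖x‖ ^ 2 * (Real.log (‖x‖ ^ 2) / 2 - Real.log ε)

lemma mE_eq {ε : ℝ} (hε : 0 < ε) {x : E2} (hx : ε < ‖x‖) :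
    mE ε x = ‖x‖ ^ 2 * Real.log (‖x‖ / ε) := by
  have hx0 : (0:ℝ) < ‖x‖ := lt_trans hε hx
  rw [mE, Real.log_div (ne_of_gt hx0) (ne_of_gt hε), Real.log_pow]
  ring

lemma mE_pos {ε : ℝ} (hε : 0 < ε) {x : E2} (hx : ε < ‖x‖) : 0 < mE ε x := by
  have hx0 : (0:ℝ) < ‖x‖ := lt_trans hε hx
  rw [mE_eq hε hx]
  have : (0:ℝ) < Real.log (‖x‖ / ε) := Real.log_pos (by rw [lt_div_iff₀ hε]; simpa using hx)
  positivity

lemma hasFDerivAt_mE {ε : ℝ} (hε : 0 < ε) {x : E2} (hx : ε < ‖x‖) :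
    HasFDerivAt (mE ε)
      ((2 * (Real.log (‖x‖ ^ 2) / 2 - Real.log ε) + 1) • (innerSL ℝ x)) x := by
  have hx0 : (0:ℝ) < ‖x‖ := lt_trans hε hx
  have hns : (0:ℝ) < ‖x‖ ^ 2 := by positivity
  have h1 : HasFDerivAt (fun y : E2 => ‖y‖ ^ 2) (2 • (innerSL ℝ x)) x :=
    (hasFDerivAt_id x).norm_sq
  have hlog : HasDerivAt Real.log (‖x‖ ^ 2)⁻¹ (‖x‖ ^ 2) :=
    Real.hasDerivAt_log (ne_of_gt hns)
  have h2 : HasFDerivAt (fun y : E2 => Real.log (‖y‖ ^ 2))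
      ((‖x‖ ^ 2)⁻¹ • (2 • (innerSL ℝ x))) x := (hlog.comp_hasFDerivAt x h1 :)
  have hmE : mE ε = fun y : E2 => ‖y‖ ^ 2 * (2⁻¹ * Real.log (‖y‖ ^ 2) - Real.log ε) := by
    funext y; rw [mE]; ring
  rw [hmE]
  have h3 := h1.mul ((h2.const_mul (2⁻¹ : ℝ)).sub_const (Real.log ε))
  refine h3.congr_fderiv ?_
  ext y
  simp only [ContinuousLinearMap.smul_apply, ContinuousLinearMap.add_apply,
    ContinuousLinearMap.coe_smul', Pi.smul_apply, smul_eq_mul,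
    ContinuousLinearMap.coe_sub', ContinuousLinearMap.sub_apply]
  field_simp
  ring

lemma fderiv_GG_apply {ε : ℝ} (hε : 0 < ε) {u : E2 → ℝ} (hu : ContDiff ℝ (⊤ : ℕ∞) u)
    {x : E2} (hx : ε < ‖x‖) (i : Fin 2) :
    fderiv ℝ (fun y => u y ^ 2 * (mE ε y)⁻¹ * y i) x (EuclideanSpace.single i 1)
      = 2 * u x * (fderiv ℝ u x (EuclideanSpace.single i 1)) * (mE ε x)⁻¹ * x i
        - u x ^ 2 * (mE ε x ^ 2)⁻¹ * (2 * (Real.log (‖x‖ ^ 2) / 2 - Real.log ε) + 1)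
            * (x i) ^ 2
        + u x ^ 2 * (mE ε x)⁻¹ := by
  have hdu : HasFDerivAt u (fderiv ℝ u x) x := (hu.differentiable (by simp) x).hasFDerivAt
  have hu2 : HasFDerivAt (fun y => u y ^ 2)
      (u x • fderiv ℝ u x + u x • fderiv ℝ u x) x := by
    have := hdu.mul hdu
    exact this.congr_of_eventuallyEq (Filter.Eventually.of_forall fun y => by simp [pow_two])
  have hW : HasFDerivAt (fun y => (mE ε y)⁻¹)
      (-(mE ε x ^ 2)⁻¹ • ((2 * (Real.log (‖x‖ ^ 2) / 2 - Real.log ε) + 1) • (innerSL ℝ x))) x :=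
    (hasDerivAt_inv (ne_of_gt (mE_pos hε hx))).comp_hasFDerivAt x (hasFDerivAt_mE hε hx)
  have hproj : HasFDerivAt (fun y : E2 => y i) (EuclideanSpace.proj (𝕜 := ℝ) i) x :=
    (EuclideanSpace.proj (𝕜 := ℝ) i).hasFDerivAt
  have htot := (hu2.mul hW).mul hproj
  rw [show fderiv ℝ (fun y => u y ^ 2 * (mE ε y)⁻¹ * y i) x = _ from htot.fderiv]
  simp only [ContinuousLinearMap.add_apply, ContinuousLinearMap.smul_apply,
    ContinuousLinearMap.coe_smul', Pi.smul_apply, smul_eq_mul, innerSL_apply_apply,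
    EuclideanSpace.inner_single_right, RCLike.inner_apply, starRingEnd_apply, star_trivial,
    PiLp.proj_apply, EuclideanSpace.single_apply, pow_one, Nat.cast_ofNat]
  simp [EuclideanSpace.single_apply]
  ring

lemma norm_sq_eq_sum2 (x : E2) : ‖x‖ ^ 2 = x 0 ^ 2 + x 1 ^ 2 := by
  rw [EuclideanSpace.norm_eq, Real.sq_sqrt (by positivity)]
  simp [Fin.sum_univ_two, sq_abs]

lemma decomp2 (x : E2) :
    x = x 0 • EuclideanSpace.single (0 : Fin 2) (1:ℝ) + x 1 • EuclideanSpace.single 1 1 := by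
  ext j
  fin_cases j <;> simp [EuclideanSpace.single_apply]

lemma div_sum {ε : ℝ} (hε : 0 < ε) {u : E2 → ℝ} (hu : ContDiff ℝ (⊤ : ℕ∞) u)
    {x : E2} (hx : ε < ‖x‖) :
    fderiv ℝ (fun y => u y ^ 2 * (mE ε y)⁻¹ * y 0) x (EuclideanSpace.single 0 1)
      + fderiv ℝ (fun y => u y ^ 2 * (mE ε y)⁻¹ * y 1) x (EuclideanSpace.single 1 1)
      = 2 * u x * (mE ε x)⁻¹ * fderiv ℝ u x x
        - u x ^ 2 * ((‖x‖ * Real.log (‖x‖ / ε)) ^ 2)⁻¹ := by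
  have hx0 : (0:ℝ) < ‖x‖ := lt_trans hε hx
  have hA : Real.log (‖x‖ / ε) = Real.log (‖x‖ ^ 2) / 2 - Real.log ε := by
    rw [Real.log_div (ne_of_gt hx0) (ne_of_gt hε), Real.log_pow]; ring
  have hApos : (0:ℝ) < Real.log (‖x‖ ^ 2) / 2 - Real.log ε := by
    rw [← hA]; exact Real.log_pos (by rw [lt_div_iff₀ hε]; simpa using hx)
  have hdux : fderiv ℝ u x x
      = x 0 * fderiv ℝ u x (EuclideanSpace.single 0 1)
        + x 1 * fderiv ℝ u x (EuclideanSpace.single 1 1) := by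
    set L := fderiv ℝ u x with hL
    conv_lhs => rw [decomp2 x]
    simp
  have hm : mE ε x = ‖x‖ ^ 2 * (Real.log (‖x‖ ^ 2) / 2 - Real.log ε) := rfl
  have h2 : ‖x‖ ^ 2 = x 0 ^ 2 + x 1 ^ 2 := norm_sq_eq_sum2 x
  rw [fderiv_GG_apply hε hu hx 0, fderiv_GG_apply hε hu hx 1, hdux, hA]
  have key : 2 * (mE ε x)⁻¹
      - (mE ε x ^ 2)⁻¹ * (2 * (Real.log (‖x‖ ^ 2) / 2 - Real.log ε) + 1) * (x 0 ^ 2 + x 1 ^ 2)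
      = -(((‖x‖ * (Real.log (‖x‖ ^ 2) / 2 - Real.log ε)) ^ 2)⁻¹) := by
    rw [hm]; simp only [mul_pow]; rw [← h2]
    have hn0 : (‖x‖:ℝ) ^ 2 ≠ 0 := by positivity
    generalize Real.log (‖x‖ ^ 2) / 2 - Real.log ε = B at hApos ⊢
    have hBne : B ≠ 0 := ne_of_gt hApos
    generalize (‖x‖:ℝ) ^ 2 = n at hn0 ⊢
    field_simp
    ring
  linear_combination (u x ^ 2) * key

lemma integral_fderiv_apply_zero' {g : E2 → ℝ} (hg : ContDiff ℝ 1 g)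
    (h2g : HasCompactSupport g) (v : E2) : ∫ x, fderiv ℝ g x v = 0 := by
  have h := integral_mul_fderiv_eq_neg_fderiv_mul_of_integrable (μ := (volume : Measure E2))
    (f := fun _ ↦ (1:ℝ)) (g := g) (v := v) ?_ ?_ ?_ (fun x _ => (differentiable_const (1:ℝ)) x)
    (fun x _ => (hg.differentiable one_ne_zero) x)
  · simpa [fderiv_const] using h
  · simp [fderiv_const]
  · simp only [one_mul]
    apply Continuous.integrable_of_hasCompactSupport
    · exact (hg.continuous_fderiv one_ne_zero).clm_apply continuous_const
    · exact (h2g.fderiv ℝ).comp_left (g := fun T : E2 →L[ℝ] ℝ ↦ T v) rfl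
  · simp only [one_mul]
    exact hg.continuous.integrable_of_hasCompactSupport h2g


/-- Logarithmic Hardy inequality in ℝ²: for u smooth, compactly supported in
the complement of the closed ball of radius ε,
‖u/(|x| log(|x|/ε))‖₂ ≤ 2 ‖∇u‖₂. -/
theorem hardy_inequality_log (ε : ℝ) (hε : 0 < ε)
    (u : EuclideanSpace ℝ (Fin 2) → ℝ)
    (hu : ContDiff ℝ (⊤ : ℕ∞) u) (hsupp : HasCompactSupport u)
    (hsupp' : tsupport u ⊆ {x : EuclideanSpace ℝ (Fin 2) | ε < ‖x‖}) :
    Real.sqrt (∫ x, (u x / (‖x‖ * Real.log (‖x‖ / ε))) ^ 2) ≤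
      2 * Real.sqrt (∫ x, ‖fderiv ℝ u x‖ ^ 2) := by
  classical
  set G : Fin 2 → E2 → ℝ := fun i y => u y ^ 2 * (mE ε y)⁻¹ * y i with hG
  set J1 : E2 → ℝ := fun x => (2 * u x) * ((mE ε x)⁻¹ * fderiv ℝ u x x) with hJ1
  set J2 : E2 → ℝ := fun x => u x * (u x * ((‖x‖ * Real.log (‖x‖ / ε)) ^ 2)⁻¹) with hJ2
  set p : E2 → ℝ := fun x => |u x| * |(‖x‖ * Real.log (‖x‖ / ε))⁻¹| with hp
  set q : E2 → ℝ := fun x => ‖fderiv ℝ u x‖ with hq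
  have hu1 : ContDiff ℝ 1 u := hu.of_le (by simp)
  have hmemU : ∀ x : E2, u x ≠ 0 → ε < ‖x‖ := fun x hx =>
    hsupp' (subset_tsupport u (by simpa [Function.mem_support] using hx))
  have hzero_off : ∀ x : E2, ¬ ε < ‖x‖ → ∀ᶠ y in nhds x, u y = 0 := by
    intro x hx
    have hxK : x ∉ tsupport u := fun h => hx (hsupp' h)
    filter_upwards [(isClosed_tsupport u).isOpen_compl.mem_nhds hxK] with y hy
    exact image_eq_zero_of_notMem_tsupport hy
  -- positivity facts
  have hx_norm : ∀ x : E2, ε < ‖x‖ → 0 < ‖x‖ := fun x hx => lt_trans hε hx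
  have hx_log : ∀ x : E2, ε < ‖x‖ → 0 < Real.log (‖x‖ / ε) := fun x hx =>
    Real.log_pos (by rw [lt_div_iff₀ hε]; simpa using hx)
  -- continuity glue
  have glue : ∀ v w : E2 → ℝ, Continuous v → (∀ x : E2, ε < ‖x‖ → ContinuousAt w x) →
      (∀ x, u x = 0 → v x = 0) → Continuous fun x => v x * w x := by
    intro v w hv hw hv0
    rw [continuous_iff_continuousAt]
    intro x
    by_cases hx : ε < ‖x‖
    · exact hv.continuousAt.mul (hw x hx)
    · have hev : (fun y => v y * w y) =ᶠ[nhds x] (fun _ => (0:ℝ)) := by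
        filter_upwards [hzero_off x hx] with y hy
        simp [hv0 y hy]
      exact (continuousAt_congr hev).2 continuousAt_const
  have hcont_nsq : Continuous fun x : E2 => ‖x‖ ^ 2 := (contDiff_norm_sq (𝕜 := ℝ) (n := 1) (E := E2)).continuous
  have hmE_ca : ∀ x : E2, ε < ‖x‖ → ContinuousAt (mE ε) x := by
    intro x hx
    have h1 : ContinuousAt (fun y : E2 => ‖y‖ ^ 2) x := hcont_nsq.continuousAt
    have h2 : ContinuousAt Real.log (‖x‖ ^ 2) :=
      Real.continuousAt_log (by have := hx_norm x hx; positivity)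
    have h3 : ContinuousAt (Real.log ∘ fun y : E2 => ‖y‖ ^ 2) x :=
      ContinuousAt.comp (x := x) (g := Real.log) (f := fun y : E2 => ‖y‖ ^ 2) h2 h1
    exact (h1.mul ((h3.div_const 2).sub continuousAt_const) : )
  have hcont_norm : Continuous fun x : E2 => ‖x‖ := continuous_norm
  have hlogr_ca : ∀ x : E2, ε < ‖x‖ → ContinuousAt (fun y : E2 => Real.log (‖y‖ / ε)) x := by
    intro x hx
    exact (Real.continuousAt_log (by have := hx_norm x hx; positivity)).comp
      (hcont_norm.continuousAt.div_const ε)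
  -- regularity of G i
  have hGcd : ∀ i, ContDiff ℝ 1 (G i) := by
    intro i
    rw [contDiff_iff_contDiffAt]
    intro x
    by_cases hx : ε < ‖x‖
    · have h1 : ContDiffAt ℝ 1 (fun y : E2 => ‖y‖ ^ 2) x :=
        (contDiff_norm_sq (𝕜 := ℝ) (n := 1) (E := E2)).contDiffAt
      have h2 : ContDiffAt ℝ 1 Real.log (‖x‖ ^ 2) :=
        Real.contDiffAt_log.2 (by have := hx_norm x hx; positivity)
      have hmEcd : ContDiffAt ℝ 1 (mE ε) x :=
        h1.mul (((h2.comp x h1).div_const 2).sub contDiffAt_const)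
      have hWcd : ContDiffAt ℝ 1 (fun y : E2 => (mE ε y)⁻¹) x :=
        hmEcd.inv (ne_of_gt (mE_pos hε hx))
      have hproj : ContDiffAt ℝ 1 (fun y : E2 => y i) x :=
        (EuclideanSpace.proj (𝕜 := ℝ) i).contDiff.contDiffAt
      exact (((hu1.contDiffAt.pow 2).mul hWcd).mul hproj : )
    · have hev : G i =ᶠ[nhds x] (fun _ => (0:ℝ)) := by
        filter_upwards [hzero_off x hx] with y hy
        simp [hG, hy]
      exact contDiffAt_const.congr_of_eventuallyEq hev
  have hGsupp : ∀ i, HasCompactSupport (G i) := by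
    intro i
    apply HasCompactSupport.intro hsupp
    intro x hx
    simp [hG, image_eq_zero_of_notMem_tsupport hx]
  -- integral of divergence is zero
  have hGint : ∀ i j, Integrable (fun x => fderiv ℝ (G i) x (EuclideanSpace.single j 1)) := by
    intro i j
    apply Continuous.integrable_of_hasCompactSupport
    · exact ((hGcd i).continuous_fderiv one_ne_zero).clm_apply continuous_const
    · exact ((hGsupp i).fderiv ℝ).comp_left
        (g := fun T : E2 →L[ℝ] ℝ => T (EuclideanSpace.single j 1)) rfl
  have hdivzero : ∫ x, (fderiv ℝ (G 0) x (EuclideanSpace.single 0 1)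
      + fderiv ℝ (G 1) x (EuclideanSpace.single 1 1)) = 0 := by
    rw [integral_add (hGint 0 0) (hGint 1 1),
      integral_fderiv_apply_zero' (hGcd 0) (hGsupp 0),
      integral_fderiv_apply_zero' (hGcd 1) (hGsupp 1)]
    norm_num
  -- pointwise divergence identity
  have hpt : ∀ x : E2, fderiv ℝ (G 0) x (EuclideanSpace.single 0 1)
      + fderiv ℝ (G 1) x (EuclideanSpace.single 1 1) = J1 x - J2 x := by
    intro x
    by_cases hx : ε < ‖x‖
    · have := div_sum hε hu hx
      rw [hG, hJ1, hJ2]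
      rw [this]
      ring
    · have hfz : ∀ i : Fin 2, fderiv ℝ (G i) x = 0 := by
        intro i
        have hev : G i =ᶠ[nhds x] (fun _ => (0:ℝ)) := by
          filter_upwards [hzero_off x hx] with y hy
          simp [hG, hy]
        rw [hev.fderiv_eq]
        exact fderiv_const_apply 0
      have hux : u x = 0 := by
        by_contra h
        exact hx (hmemU x h)
      simp [hfz, hJ1, hJ2, hux]
  -- integrability of J1, J2, p, q and friends
  have hqcont : Continuous q := (hu1.continuous_fderiv one_ne_zero).norm
  have hJ1cont : Continuous J1 := by
    apply glue
    · exact continuous_const.mul hu.continuous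
    · intro x hx
      exact ((hmE_ca x hx).inv₀ (ne_of_gt (mE_pos hε hx))).mul
        (((hu1.continuous_fderiv one_ne_zero).clm_apply continuous_id).continuousAt)
    · intro x hx; simp [hx]
  have hJ2cont : Continuous J2 := by
    apply glue
    · exact hu.continuous
    · intro x hx
      have hne : (‖x‖ * Real.log (‖x‖ / ε)) ^ 2 ≠ 0 := by
        have h1 := hx_norm x hx; have h2 := hx_log x hx; positivity
      exact hu.continuous.continuousAt.mul
        (((hcont_norm.continuousAt.mul (hlogr_ca x hx)).pow 2).inv₀ hne)
    · intro x hx; simp [hx]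
  have hpcont : Continuous p := by
    apply glue
    · exact hu.continuous.abs
    · intro x hx
      have hne : ‖x‖ * Real.log (‖x‖ / ε) ≠ 0 := by
        have h1 := hx_norm x hx; have h2 := hx_log x hx; positivity
      exact (((hcont_norm.continuousAt.mul (hlogr_ca x hx)).inv₀ hne)).abs
    · intro x hx; simp [hx]
  have hsuppK : ∀ f : E2 → ℝ, (∀ x, u x = 0 → f x = 0) → HasCompactSupport f := by
    intro f hf
    apply HasCompactSupport.intro hsupp
    intro x hx
    exact hf x (image_eq_zero_of_notMem_tsupport hx)
  have hJ1int : Integrable J1 := hJ1cont.integrable_of_hasCompactSupport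
    (hsuppK J1 (by intro x hx; simp [hJ1, hx]))
  have hJ2int : Integrable J2 := hJ2cont.integrable_of_hasCompactSupport
    (hsuppK J2 (by intro x hx; simp [hJ2, hx]))
  have hpqint : Integrable (fun x => p x * q x) :=
    (hpcont.mul hqcont).integrable_of_hasCompactSupport
      (hsuppK _ (by intro x hx; simp [hp, hx]))
  -- ∫ J2 = ∫ J1
  have hJ2J1 : ∫ x, J2 x = ∫ x, J1 x := by
    have h0 : ∫ x, (J1 x - J2 x) = 0 := by
      rw [← hdivzero]
      exact integral_congr_ae (Filter.Eventually.of_forall fun x => (hpt x).symm)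
    rw [integral_sub hJ1int hJ2int] at h0
    linarith
  -- pointwise bound J1 ≤ 2 p q
  have hbound : ∀ x : E2, J1 x ≤ 2 * (p x * q x) := by
    intro x
    by_cases hux : u x = 0
    · simp [hJ1, hp, hux]
    · have hx : ε < ‖x‖ := hmemU x hux
      have hr := hx_norm x hx
      have hL := hx_log x hx
      have hmeq : mE ε x = ‖x‖ ^ 2 * Real.log (‖x‖ / ε) := mE_eq hε hx
      have hWpos : (0:ℝ) < (mE ε x)⁻¹ := by
        rw [hmeq]; positivity
      have hdb : |fderiv ℝ u x x| ≤ q x * ‖x‖ := by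
        have := (fderiv ℝ u x).le_opNorm x
        simpa [Real.norm_eq_abs, hq] using this
      have step1 : J1 x ≤ 2 * (|u x| * ((mE ε x)⁻¹ * (q x * ‖x‖))) := by
        rw [hJ1]
        have h1 : u x * ((mE ε x)⁻¹ * fderiv ℝ u x x)
            ≤ |u x| * ((mE ε x)⁻¹ * |fderiv ℝ u x x|) := by
          calc u x * ((mE ε x)⁻¹ * fderiv ℝ u x x)
              ≤ |u x * ((mE ε x)⁻¹ * fderiv ℝ u x x)| := le_abs_self _
            _ = |u x| * ((mE ε x)⁻¹ * |fderiv ℝ u x x|) := by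
                rw [abs_mul, abs_mul, abs_of_nonneg hWpos.le]
        have h2 : |u x| * ((mE ε x)⁻¹ * |fderiv ℝ u x x|)
            ≤ |u x| * ((mE ε x)⁻¹ * (q x * ‖x‖)) := by
          apply mul_le_mul_of_nonneg_left _ (abs_nonneg _)
          exact mul_le_mul_of_nonneg_left hdb hWpos.le
        nlinarith [le_trans h1 h2]
      refine le_trans step1 ?_
      have heqq : |u x| * ((mE ε x)⁻¹ * (q x * ‖x‖)) = p x * q x := by
        have hinv : |(‖x‖ * Real.log (‖x‖ / ε))⁻¹| = (‖x‖ * Real.log (‖x‖ / ε))⁻¹ := by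
          apply abs_of_nonneg; positivity
        rw [hp]
        simp only []
        rw [hinv, hmeq, hq]
        have h1 : ‖x‖ ≠ 0 := ne_of_gt hr
        have h2 : Real.log (‖x‖ / ε) ≠ 0 := ne_of_gt hL
        field_simp
      rw [heqq]
  -- ∫ J1 ≤ 2 ∫ p q
  have hint1 : ∫ x, J1 x ≤ 2 * ∫ x, p x * q x := by
    rw [← integral_const_mul]
    exact integral_mono hJ1int (hpqint.const_mul 2) hbound
  -- Cauchy-Schwarz
  have hpq2 : (2:ℝ).HolderConjugate 2 := Real.HolderConjugate.two_two
  have hpmem : MemLp p (ENNReal.ofReal 2) := by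
    rw [show ENNReal.ofReal 2 = 2 by norm_num]
    exact hpcont.memLp_of_hasCompactSupport
      (hsuppK _ (by intro x hx; simp [hp, hx]))
  have hqmem : MemLp q (ENNReal.ofReal 2) := by
    rw [show ENNReal.ofReal 2 = 2 by norm_num]
    apply hqcont.memLp_of_hasCompactSupport
    exact (hsupp.fderiv ℝ).comp_left (g := fun T : E2 →L[ℝ] ℝ => ‖T‖) norm_zero
  have hCS : ∫ x, p x * q x
      ≤ (∫ x, p x ^ (2:ℝ)) ^ ((1:ℝ)/2) * (∫ x, q x ^ (2:ℝ)) ^ ((1:ℝ)/2) :=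
    integral_mul_le_Lp_mul_Lq_of_nonneg hpq2
      (Filter.Eventually.of_forall fun x => by positivity)
      (Filter.Eventually.of_forall fun x => by positivity) hpmem hqmem
  -- identify integrands
  have hrpow : ∀ f : E2 → ℝ, (∀ x, 0 ≤ f x) → (∫ x, f x ^ (2:ℝ)) = ∫ x, f x ^ (2:ℕ) := by
    intro f hf
    apply integral_congr_ae
    exact Filter.Eventually.of_forall fun x => by
      show f x ^ (2:ℝ) = f x ^ (2:ℕ)
      rw [show ((2:ℝ)) = ((2:ℕ):ℝ) by norm_num, Real.rpow_natCast]
  have hp2eq : ∀ x : E2, p x ^ (2:ℕ) = (u x / (‖x‖ * Real.log (‖x‖ / ε))) ^ 2 := by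
    intro x
    rw [hp]
    simp only []
    rw [mul_pow, sq_abs, sq_abs]
    ring
  have hJ2eq : ∀ x : E2, J2 x = (u x / (‖x‖ * Real.log (‖x‖ / ε))) ^ 2 := by
    intro x
    rw [hJ2]
    simp only []
    ring
  set I := ∫ x, (u x / (‖x‖ * Real.log (‖x‖ / ε))) ^ 2 with hI
  set Jq := ∫ x, ‖fderiv ℝ u x‖ ^ 2 with hJq
  have hI0 : 0 ≤ I := integral_nonneg fun x => sq_nonneg _
  have hJq0 : 0 ≤ Jq := integral_nonneg fun x => sq_nonneg _
  have hIJ2 : ∫ x, J2 x = I := integral_congr_ae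
    (Filter.Eventually.of_forall fun x => hJ2eq x)
  have hIp2 : (∫ x, p x ^ (2:ℝ)) = I := by
    rw [hrpow p (fun x => by rw [hp]; positivity)]
    exact integral_congr_ae (Filter.Eventually.of_forall fun x => hp2eq x)
  have hIq2 : (∫ x, q x ^ (2:ℝ)) = Jq := by
    rw [hrpow q (fun x => norm_nonneg _)]
  have hmain : I ≤ 2 * (Real.sqrt I * Real.sqrt Jq) := by
    calc I = ∫ x, J2 x := hIJ2.symm
      _ = ∫ x, J1 x := hJ2J1
      _ ≤ 2 * ∫ x, p x * q x := hint1
      _ ≤ 2 * ((∫ x, p x ^ (2:ℝ)) ^ ((1:ℝ)/2) * (∫ x, q x ^ (2:ℝ)) ^ ((1:ℝ)/2)) := by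
          linarith [hCS]
      _ = 2 * (Real.sqrt I * Real.sqrt Jq) := by
          rw [hIp2, hIq2, Real.sqrt_eq_rpow, Real.sqrt_eq_rpow]
  have hsI := Real.sqrt_nonneg I
  have hsJ := Real.sqrt_nonneg Jq
  have hsqI : Real.sqrt I * Real.sqrt I = I := Real.mul_self_sqrt hI0
  nlinarith [hmain, hsqI, hsI, hsJ]
end

section
/- Setting φ₀(z) = -2a tanh(az) with a > 0, the function φ₀ satisfies the ODE -φ₀''' + φ₀φ₀'' + (φ₀')² = 0 on ℝ, and ∫_{-∞}^{+∞} (1/3)(φ₀'(z))² dz = 16a³/9. -/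
/-!
Derivatives of polynomials in `t = tanh (a z)` are again polynomials in `t`, since
`t' = a (1 - t²)`: `φ₀ = -2a t`, `φ₀' = -2a² (1 - t²)`, `φ₀'' = 4a³ (t - t³)` and
`φ₀''' = 4a⁴ (1 - t²) (1 - 3t²)`, so the ODE is a polynomial identity in `t`.
Likewise `(φ₀')² = 4a⁴ (1 - t²)²` is the derivative of `4a³ (t - t³/3)`, which tends to
`± 8a³/3` at `± ∞`. A nonnegative derivative of a function with limits at both ends is
integrable, so `∫ (φ₀')² = 16a³/3`.
-/

open MeasureTheory Real Filter Set Topology Polynomial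

namespace Real

theorem hasDerivAt_tanh (x : ℝ) : HasDerivAt tanh (1 - tanh x ^ 2) x := by
  have hcosh : cosh x ≠ 0 := (cosh_pos x).ne'
  have h := (hasDerivAt_sinh x).div (hasDerivAt_cosh x) hcosh
  rw [show sinh / cosh = tanh from funext fun y => (tanh_eq_sinh_div_cosh y).symm] at h
  refine h.congr_deriv ?_
  rw [tanh_eq_sinh_div_cosh]
  field_simp

theorem tanh_eq_one_sub_two_div (x : ℝ) : tanh x = 1 - 2 / (exp (2 * x) + 1) := by
  have h : exp (2 * x) = exp x * exp x := by rw [← exp_add, two_mul]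
  rw [tanh_eq, h, exp_neg]
  field_simp
  ring

theorem tendsto_tanh_atTop : Tendsto tanh atTop (𝓝 1) := by
  have h : Tendsto (fun x : ℝ => exp (2 * x) + 1) atTop atTop :=
    tendsto_atTop_add_const_right _ 1
      (tendsto_exp_atTop.comp (tendsto_id.const_mul_atTop two_pos))
  simpa [← tanh_eq_one_sub_two_div] using (h.const_div_atTop 2).const_sub 1

theorem tendsto_tanh_atBot : Tendsto tanh atBot (𝓝 (-1)) := by
  simpa [Function.comp_def] using (tendsto_tanh_atTop.comp tendsto_neg_atBot_atTop).neg

end Real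

noncomputable def tanhDeriv (a : ℝ) (p : ℝ[X]) : ℝ[X] := C a * (1 - X ^ 2) * derivative p

theorem hasDerivAt_eval_tanh_mul (p : ℝ[X]) (a z : ℝ) :
    HasDerivAt (fun z => p.eval (tanh (a * z))) ((tanhDeriv a p).eval (tanh (a * z))) z := by
  have h := (p.hasDerivAt (tanh (a * z))).comp z
    ((hasDerivAt_tanh (a * z)).comp z ((hasDerivAt_id z).const_mul a))
  refine h.congr_deriv ?_
  simp only [tanhDeriv, eval_mul, eval_C, eval_sub, eval_one, eval_pow, eval_X]
  ring

theorem iterate_deriv_eval_tanh_mul (p : ℝ[X]) (a : ℝ) (n : ℕ) :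
    deriv^[n] (fun z => p.eval (tanh (a * z))) =
      fun z => ((tanhDeriv a)^[n] p).eval (tanh (a * z)) := by
  induction n generalizing p with
  | zero => rfl
  | succ n ih =>
    rw [Function.iterate_succ_apply, Function.iterate_succ_apply, ← ih]
    congr 1
    exact funext fun z => (hasDerivAt_eval_tanh_mul p a z).deriv

theorem tendsto_eval_tanh_mul_atTop (p : ℝ[X]) {a : ℝ} (ha : 0 < a) :
    Tendsto (fun z => p.eval (tanh (a * z))) atTop (𝓝 (p.eval 1)) :=
  (p.continuous.tendsto 1).comp (tendsto_tanh_atTop.comp (tendsto_id.const_mul_atTop ha))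

theorem tendsto_eval_tanh_mul_atBot (p : ℝ[X]) {a : ℝ} (ha : 0 < a) :
    Tendsto (fun z => p.eval (tanh (a * z))) atBot (𝓝 (p.eval (-1))) :=
  (p.continuous.tendsto (-1)).comp (tendsto_tanh_atBot.comp (tendsto_id.const_mul_atBot ha))

theorem integrableOn_Iic_deriv_of_nonneg {g g' : ℝ → ℝ} {a m : ℝ}
    (hderiv : ∀ x ∈ Iic a, HasDerivAt g (g' x) x) (hpos : ∀ x ∈ Iio a, 0 ≤ g' x)
    (hg : Tendsto g atBot (𝓝 m)) : IntegrableOn g' (Iic a) := by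
  have hreflect : IntegrableOn (fun x => g' (-x)) (Ioi (-a)) := by
    refine integrableOn_Ioi_deriv_of_nonneg' (g := fun x => -g (-x)) (l := -m)
      (fun x hx => ?_) (fun x hx => hpos _ (neg_lt.1 (mem_Ioi.1 hx))) ?_
    · have h := ((hderiv (-x) (neg_le.1 (mem_Ici.1 hx))).comp x (hasDerivAt_neg x)).neg
      simp only [Function.comp_def, mul_neg_one, neg_neg] at h
      exact h
    · exact (hg.comp tendsto_neg_atTop_atBot).neg
  rw [← Measure.map_neg_eq_self (volume : Measure ℝ),
    measurableEmbedding_neg.integrableOn_map_iff]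
  simpa [Function.comp_def, neg_preimage, neg_Iic] using
    (integrableOn_Ici_iff_integrableOn_Ioi (by simp)).2 hreflect

theorem integral_of_hasDerivAt_of_nonneg {g g' : ℝ → ℝ} {m n : ℝ}
    (hderiv : ∀ x, HasDerivAt g (g' x) x) (hpos : ∀ x, 0 ≤ g' x)
    (hbot : Tendsto g atBot (𝓝 m)) (htop : Tendsto g atTop (𝓝 n)) : ∫ x, g' x = n - m := by
  refine integral_of_hasDerivAt_of_tendsto hderiv ?_ hbot htop
  rw [← integrableOn_univ, ← Iic_union_Ioi (a := (0 : ℝ))]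
  exact (integrableOn_Iic_deriv_of_nonneg (fun x _ => hderiv x) (fun x _ => hpos x) hbot).union
    (integrableOn_Ioi_deriv_of_nonneg' (fun x _ => hderiv x) (fun x _ => hpos x) htop)

/-- φ₀(z) = -2a tanh(az) satisfies -φ₀''' + φ₀φ₀'' + (φ₀')² = 0 and
(1/3)∫(φ₀')² = 16a³/9. -/
theorem tanh_profile (a : ℝ) (ha : 0 < a) :
    let φ : ℝ → ℝ := fun z => -2 * a * Real.tanh (a * z)
    (∀ z, -(deriv^[3] φ z) + φ z * deriv^[2] φ z + (deriv φ z) ^ 2 = 0) ∧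
      (1 / 3) * (∫ z : ℝ, (deriv φ z) ^ 2) = 16 * a ^ 3 / 9 := by
  intro φ
  set P : ℝ[X] := C (-2 * a) * X
  have hφ : φ = fun z => P.eval (tanh (a * z)) := by
    funext z
    simp [φ, P]
  have hderivφ := iterate_deriv_eval_tanh_mul P a
  rw [hφ]
  refine ⟨fun z => ?_, ?_⟩
  · rw [hderivφ 3, hderivφ 2, ← Function.iterate_one deriv, hderivφ 1]
    simp only [P, tanhDeriv, Function.iterate_succ, Function.iterate_zero, Function.comp_apply,
      id, derivative_mul, derivative_C, derivative_X, derivative_add, derivative_sub, derivative_one,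
      derivative_zero, derivative_sq, eval_mul, eval_add, eval_sub, eval_C, eval_one, eval_pow,
      eval_X, eval_zero]
    ring
  · set G : ℝ[X] := C (4 * a ^ 3) * (X - C (1 / 3) * X ^ 3)
    have hG (z : ℝ) : HasDerivAt (fun z => G.eval (tanh (a * z)))
        ((deriv (fun z => P.eval (tanh (a * z))) z) ^ 2) z := by
      refine (hasDerivAt_eval_tanh_mul G a z).congr_deriv ?_
      rw [(hasDerivAt_eval_tanh_mul P a z).deriv]
      simp only [G, P, tanhDeriv, derivative_C_mul, derivative_sub, derivative_X, derivative_X_pow,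
        eval_mul, eval_sub, eval_C, eval_one, eval_pow, eval_X]
      ring
    rw [integral_of_hasDerivAt_of_nonneg hG (fun z => sq_nonneg _)
      (tendsto_eval_tanh_mul_atBot G ha) (tendsto_eval_tanh_mul_atTop G ha)]
    simp only [G, eval_mul, eval_sub, eval_C, eval_pow, eval_X]
    ring
end
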